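/- arXiv:2503.13445 — 2 statements merged into one kernel-verified Lean document; each statement's English description precedes it below -/
import Mathlib

section
/- With k > 0 fixed, φ(TPR,FPR) = 1 if and only if TPR = 1 and FPR = 0 (over the domain where the denominator is positive). -/
/-- φ(TPR,FPR) = 1 iff TPR = 1 and FPR = 0 (on the domain where the
denominator is positive), for fixed k > 0. -/
theorem stmt_8 (k TPR FPR : ℝ) (hk : 0 < k)
    (hTPR : TPR ∈ Set.Icc (0 : ℝ) 1) (hFPR : FPR ∈ Set.Icc (0 : ℝ) 1)
    (hden : 0 < (TPR * k + FPR) * ((1 - TPR) * k + (1 - FPR))) :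
    Real.sqrt k * (TPR - FPR) /
        Real.sqrt ((TPR * k + FPR) * ((1 - TPR) * k + (1 - FPR))) = 1 ↔
      TPR = 1 ∧ FPR = 0 := by
  obtain ⟨ht0, ht1⟩ := hTPR
  obtain ⟨hf0, hf1⟩ := hFPR
  set D := (TPR * k + FPR) * ((1 - TPR) * k + (1 - FPR)) with hD
  have hsD : 0 < Real.sqrt D := Real.sqrt_pos.mpr hden
  constructor
  · intro h
    have heq : Real.sqrt k * (TPR - FPR) = Real.sqrt D := by
      field_simp at h
      linarith [h]
    have hsq : k * (TPR - FPR) ^ 2 = D := by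
      have := congrArg (· ^ 2) heq
      simp only [mul_pow, Real.sq_sqrt hk.le, Real.sq_sqrt hden.le] at this
      linarith [this]
    have hdiff : 0 < TPR - FPR := by
      have hkpos : 0 < Real.sqrt k := Real.sqrt_pos.mpr hk
      nlinarith [heq, hsD]
    have hzero : (k ^ 2 + k) * (TPR * (1 - TPR)) + (k + 1) * (FPR * (1 - FPR)) = 0 := by
      rw [hD] at hsq; nlinarith [hsq]
    have h1 : 0 ≤ TPR * (1 - TPR) := mul_nonneg ht0 (by linarith)
    have h2 : 0 ≤ FPR * (1 - FPR) := mul_nonneg hf0 (by linarith)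
    have ht : TPR * (1 - TPR) = 0 := by nlinarith
    have hf : FPR * (1 - FPR) = 0 := by nlinarith
    rcases mul_eq_zero.mp ht with ht' | ht' <;>
      rcases mul_eq_zero.mp hf with hf' | hf' <;>
      constructor <;> linarith
  · rintro ⟨h1, h2⟩
    subst h1; subst h2
    simp only [sub_zero, mul_one, one_mul, add_zero, sub_self, zero_mul, mul_zero]
    have : D = k := by rw [hD]; ring
    rw [this]
    exact div_self (Real.sqrt_pos.mpr hk).ne'
end

section
/- With k > 0 fixed, the function φ(TPR, FPR) = √k·(TPR−FPR)/√((TPR·k+FPR)((1−TPR)·k+(1−FPR))) is strictly increasing in TPR and strictly decreasing in FPR on the open domain where TPR, FPR ∈ (0,1). -/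
private lemma aux_mono (k A B u₁ u₂ : ℝ) (hk : 0 < k) (hA : 0 < A) (hB : 0 < B)
    (h1 : 0 < k * u₁ + A) (h2 : 0 < B - k * u₁)
    (h3 : 0 < k * u₂ + A) (h4 : 0 < B - k * u₂) (h : u₁ < u₂) :
    u₁ / Real.sqrt ((k * u₁ + A) * (B - k * u₁)) <
      u₂ / Real.sqrt ((k * u₂ + A) * (B - k * u₂)) := by
  set P₁ := (k * u₁ + A) * (B - k * u₁) with hP₁
  set P₂ := (k * u₂ + A) * (B - k * u₂) with hP₂
  have hP₁pos : 0 < P₁ := mul_pos h1 h2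
  have hP₂pos : 0 < P₂ := mul_pos h3 h4
  have hs₁ : 0 < Real.sqrt P₁ := Real.sqrt_pos.mpr hP₁pos
  have hs₂ : 0 < Real.sqrt P₂ := Real.sqrt_pos.mpr hP₂pos
  have hsq₁ : (Real.sqrt P₁) ^ 2 = P₁ := Real.sq_sqrt hP₁pos.le
  have hsq₂ : (Real.sqrt P₂) ^ 2 = P₂ := Real.sq_sqrt hP₂pos.le
  rw [div_lt_div_iff₀ hs₁ hs₂]
  rcases le_or_gt 0 u₁ with hu₁ | hu₁
  · -- both nonneg (u₂ > 0)
    have hu₂ : 0 < u₂ := lt_of_le_of_lt hu₁ h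
    have key : (u₁ * Real.sqrt P₂) ^ 2 < (u₂ * Real.sqrt P₁) ^ 2 := by
      have : u₁ ^ 2 * P₂ < u₂ ^ 2 * P₁ := by
        nlinarith [mul_pos (sub_pos.mpr h) (mul_pos hA (mul_pos hu₂ h2)),
          mul_nonneg (sub_pos.mpr h).le (mul_nonneg (mul_nonneg hB.le hu₁) h3.le)]
      calc (u₁ * Real.sqrt P₂) ^ 2 = u₁ ^ 2 * P₂ := by rw [mul_pow, hsq₂]
        _ < u₂ ^ 2 * P₁ := this
        _ = (u₂ * Real.sqrt P₁) ^ 2 := by rw [mul_pow, hsq₁]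
    exact lt_of_pow_lt_pow_left₀ 2 (by positivity) key
  · rcases le_or_gt 0 u₂ with hu₂ | hu₂
    · calc u₁ * Real.sqrt P₂ < 0 := mul_neg_of_neg_of_pos hu₁ hs₂
        _ ≤ u₂ * Real.sqrt P₁ := mul_nonneg hu₂ hs₁.le
    · -- both negative
      have key : ((-u₂) * Real.sqrt P₁) ^ 2 < ((-u₁) * Real.sqrt P₂) ^ 2 := by
        have : u₂ ^ 2 * P₁ < u₁ ^ 2 * P₂ := by
          nlinarith [mul_pos (sub_pos.mpr h) (mul_pos hA (mul_pos (neg_pos.mpr hu₂) h2)),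
            mul_pos (sub_pos.mpr h) (mul_pos hB (mul_pos (neg_pos.mpr hu₁) h3))]
        calc ((-u₂) * Real.sqrt P₁) ^ 2 = u₂ ^ 2 * P₁ := by rw [mul_pow, hsq₁]; ring
          _ < u₁ ^ 2 * P₂ := this
          _ = ((-u₁) * Real.sqrt P₂) ^ 2 := by rw [mul_pow, hsq₂]; ring
      have := lt_of_pow_lt_pow_left₀ 2 (mul_nonneg (neg_nonneg.mpr hu₁.le) hs₂.le) key
      nlinarith [this]

/-- For fixed k > 0, φ(TPR,FPR) = √k·(TPR−FPR)/√((TPR·k+FPR)((1−TPR)·k+(1−FPR)))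
is strictly increasing in TPR and strictly decreasing in FPR on (0,1)². -/
theorem stmt_17 (k : ℝ) (hk : 0 < k) :
    (∀ t₁ t₂ f : ℝ, t₁ ∈ Set.Ioo (0 : ℝ) 1 → t₂ ∈ Set.Ioo (0 : ℝ) 1 →
      f ∈ Set.Ioo (0 : ℝ) 1 → t₁ < t₂ →
      Real.sqrt k * (t₁ - f) / Real.sqrt ((t₁ * k + f) * ((1 - t₁) * k + (1 - f))) <
        Real.sqrt k * (t₂ - f) / Real.sqrt ((t₂ * k + f) * ((1 - t₂) * k + (1 - f)))) ∧
    (∀ t f₁ f₂ : ℝ, t ∈ Set.Ioo (0 : ℝ) 1 → f₁ ∈ Set.Ioo (0 : ℝ) 1 →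
      f₂ ∈ Set.Ioo (0 : ℝ) 1 → f₁ < f₂ →
      Real.sqrt k * (t - f₂) / Real.sqrt ((t * k + f₂) * ((1 - t) * k + (1 - f₂))) <
        Real.sqrt k * (t - f₁) / Real.sqrt ((t * k + f₁) * ((1 - t) * k + (1 - f₁)))) := by
  have hsk : 0 < Real.sqrt k := Real.sqrt_pos.mpr hk
  constructor
  · intro t₁ t₂ f ht₁ ht₂ hf hlt
    obtain ⟨ht₁0, ht₁1⟩ := ht₁
    obtain ⟨ht₂0, ht₂1⟩ := ht₂
    obtain ⟨hf0, hf1⟩ := hf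
    have key := aux_mono k (f * (k + 1)) ((1 - f) * (k + 1)) (t₁ - f) (t₂ - f) hk (by nlinarith) (by nlinarith)
      (by nlinarith) (by nlinarith) (by nlinarith) (by nlinarith) (by linarith)
    have e₁ : k * (t₁ - f) + f * (k + 1) = t₁ * k + f := by ring
    have e₂ : (1 - f) * (k + 1) - k * (t₁ - f) = (1 - t₁) * k + (1 - f) := by ring
    have e₃ : k * (t₂ - f) + f * (k + 1) = t₂ * k + f := by ring
    have e₄ : (1 - f) * (k + 1) - k * (t₂ - f) = (1 - t₂) * k + (1 - f) := by ring
    rw [e₁, e₂, e₃, e₄] at key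
    rw [mul_div_assoc, mul_div_assoc]
    exact mul_lt_mul_of_pos_left key hsk
  · intro t f₁ f₂ ht hf₁ hf₂ hlt
    obtain ⟨ht0, ht1⟩ := ht
    obtain ⟨hf₁0, hf₁1⟩ := hf₁
    obtain ⟨hf₂0, hf₂1⟩ := hf₂
    have key := aux_mono 1 ((1 - t) * (k + 1)) (t * (k + 1)) (t - f₂) (t - f₁) one_pos (by nlinarith) (by nlinarith)
      (by nlinarith) (by nlinarith) (by nlinarith) (by nlinarith) (by linarith)
    have e₁ : 1 * (t - f₂) + (1 - t) * (k + 1) = (1 - t) * k + (1 - f₂) := by ring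
    have e₂ : t * (k + 1) - 1 * (t - f₂) = t * k + f₂ := by ring
    have e₃ : 1 * (t - f₁) + (1 - t) * (k + 1) = (1 - t) * k + (1 - f₁) := by ring
    have e₄ : t * (k + 1) - 1 * (t - f₁) = t * k + f₁ := by ring
    rw [e₁, e₂, e₃, e₄] at key
    rw [mul_comm ((1 - t) * k + (1 - f₂)) (t * k + f₂),
        mul_comm ((1 - t) * k + (1 - f₁)) (t * k + f₁)] at key
    rw [mul_div_assoc, mul_div_assoc]
    exact mul_lt_mul_of_pos_left key hsk
end
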